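/- arXiv:2605.24427 — 5 statements merged into one kernel-verified Lean document; each statement's English description precedes it below -/
import Mathlib

section
/- Glennie's identity G₉ holds in every associative ring in which 2 is invertible: for all x, y, z, one has H₉(x,y,z) = H₉(y,x,z), where H₉(x,y,z) := 2·(U_x(z)) ∘ (U_{y,x}(U_z(y²))) − U_x(U_z(U_{x,y}(U_y(z)))); here U_x(z) = x*z*x, U_z(y²) = z*y²*z, U_{y,x}(c) = (1/2)(y*c*x + x*c*y), U_y(z) = y*z*y, and U_{x,y}(c) = (1/2)(x*c*y + y*c*x). -/
/-- The Jordan product `a ∘ b = ½(ab + ba)` in an associative ring with `2` invertible. -/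
def jordanMul {R : Type*} [Ring R] [Invertible (2 : R)] (a b : R) : R :=
  ⅟(2 : R) * (a * b + b * a)

/-- The quadratic map `U_a(b) = a b a`. -/
def Uop {R : Type*} [Ring R] (a b : R) : R := a * b * a

/-- The polarized quadratic map `U_{a,b}(c) = ½(acb + bca)`. -/
def Upair {R : Type*} [Ring R] [Invertible (2 : R)] (a b c : R) : R :=
  ⅟(2 : R) * (a * c * b + b * c * a)

/-- `H₉(x,y,z) = 2·(U_x z) ∘ (U_{y,x} U_z (y²)) − U_x U_z U_{x,y} U_y (z)`. -/
def H9 {R : Type*} [Ring R] [Invertible (2 : R)] (x y z : R) : R :=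
  2 * jordanMul (Uop x z) (Upair y x (Uop z (y * y)))
    - Uop x (Uop z (Upair x y (Uop y z)))

/-! Expanding `H₉` in the associative ring, the U-term cancels the two mixed terms of the Jordan
product, and what remains is symmetric under exchanging `x` and `y`. -/

section
variable {R : Type*} [Ring R] [Invertible (2 : R)]

theorem mul_invOf_two_left_comm (a b : R) : a * (⅟(2 : R) * b) = ⅟2 * (a * b) :=
  ((Commute.ofNat_left 2 a).invOf_left).symm.left_comm b

theorem two_mul_jordanMul (a b : R) : 2 * jordanMul a b = a * b + b * a := by
  rw [jordanMul, ← mul_assoc, mul_invOf_self, one_mul]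

theorem H9_eq_invOf_two_mul (x y z : R) :
    H9 x y z = ⅟2 * (x * z * x * x * z * y * y * z * y + y * z * y * y * z * x * x * z * x) := by
  rw [H9, two_mul_jordanMul]
  simp only [Uop, Upair, mul_assoc, mul_invOf_two_left_comm, ← mul_add, ← mul_sub]
  congr 1
  noncomm_ring

end

/-- Glennie's identity `G₉` holds in every associative ring in which `2` is invertible:
`H₉(x,y,z) = H₉(y,x,z)`. -/
theorem glennie_G9 {R : Type*} [Ring R] [Invertible (2 : R)] (x y z : R) :
    H9 x y z = H9 y x z := by
  rw [H9_eq_invOf_two_mul, H9_eq_invOf_two_mul, add_comm]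
end

section
/- Let S be a set and let H := ℓ²(FreeMonoid S, ℝ) be the real Hilbert space of square-summable real families indexed by finite words in S, with orthonormal basis (δ_w) indexed by words w. For each s ∈ S let ℓ_s : H → H be the bounded linear operator determined by ℓ_s(δ_w) = δ_{s·w} (prepending the letter s). Then there exists an ℝ-algebra homomorphism φ from the free unital associative real algebra on S (FreeAlgebra ℝ S) to the algebra of bounded linear operators on H such that φ(X_s) = ℓ_s + ℓ_s* for every generator X_s, every φ(X_s) is a self-adjoint operator, and φ is injective. -/
noncomputable instance (S : Type*) : DecidableEq (FreeMonoid S) := Classical.decEq _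

/-!
The generator `X_s` acts as `ℓ_s + ℓ_s*`, where `ℓ_s` lengthens words by one letter and `ℓ_s*`
shortens them. Hence for a word `w`, applying the monomial `X_w` to the vacuum `δ_1` gives `δ_w`
plus basis vectors indexed by shorter words. So if `a ≠ 0` and `w₀` is a longest word in the
support of `a`, the `w₀`-coordinate of `φ(a) δ_1` is the coefficient of `X_{w₀}` in `a`, which is
nonzero.
-/

open Function

section ExtendByZero

variable {𝕜 E α β : Type*} [RCLike 𝕜] [NormedAddCommGroup E] {j : α → β}

theorem norm_rpow_extend_zero {t : ℝ} (ht : t ≠ 0) (f : α → E) :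
    (fun b => ‖extend j f 0 b‖ ^ t) = extend j (fun a => ‖f a‖ ^ t) 0 := by
  funext b
  rw [apply_extend (‖·‖ ^ t)]
  simp only [comp_def, Pi.zero_apply, norm_zero, Real.zero_rpow ht]
  rfl

theorem Memℓp.extend_zero {f : α → E} {p : ENNReal} (hp : 0 < p.toReal) (hj : Injective j)
    (hf : Memℓp f p) : Memℓp (extend j f 0) p := by
  apply memℓp_gen
  rw [norm_rpow_extend_zero hp.ne', summable_extend_zero hj]
  exact hf.summable hp

theorem lp.norm_extend_zero {p : ENNReal} (hp : 0 < p.toReal) (hj : Injective j)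
    (f : lp (fun _ : α => E) p) :
    ‖(⟨extend j f 0, (lp.memℓp f).extend_zero hp hj⟩ : lp (fun _ : β => E) p)‖ = ‖f‖ := by
  rw [lp.norm_eq_tsum_rpow hp, lp.norm_eq_tsum_rpow hp, ← tsum_extend_zero hj,
    ← norm_rpow_extend_zero hp.ne']

variable (𝕜) in
noncomputable def lp.extendByZero (hj : Injective j) :
    lp (fun _ : α => 𝕜) 2 →ₗᵢ[𝕜] lp (fun _ : β => 𝕜) 2 where
  toFun f := ⟨extend j f 0, (lp.memℓp f).extend_zero (by norm_num) hj⟩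
  map_add' f g := lp.ext <| (ExtendByZero.linearMap 𝕜 j).map_add f g
  map_smul' c f := lp.ext <| (ExtendByZero.linearMap 𝕜 j).map_smul c f
  norm_map' := lp.norm_extend_zero (by norm_num) hj

variable (hj : Injective j)

theorem lp.extendByZero_apply_apply (f : lp (fun _ : α => 𝕜) 2) (a : α) :
    lp.extendByZero 𝕜 hj f (j a) = f a :=
  hj.extend_apply _ _ _

theorem lp.extendByZero_apply_of_notMem_range (f : lp (fun _ : α => 𝕜) 2) {b : β}
    (hb : b ∉ Set.range j) : lp.extendByZero 𝕜 hj f b = 0 :=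
  extend_apply' _ _ _ hb

variable [DecidableEq α] [DecidableEq β]

theorem lp.extendByZero_single (a : α) (c : 𝕜) :
    lp.extendByZero 𝕜 hj (lp.single 2 a c) = lp.single 2 (j a) c := by
  ext b
  by_cases hb : b ∈ Set.range j
  · obtain ⟨a', rfl⟩ := hb
    simp [lp.extendByZero_apply_apply, lp.single_apply, Pi.single_apply, hj.eq_iff]
  · rw [lp.extendByZero_apply_of_notMem_range hj _ hb, lp.single_apply,
      Pi.single_eq_of_ne (fun h => hb ⟨a, h.symm⟩)]

theorem lp.adjoint_extendByZero_apply (g : lp (fun _ : β => 𝕜) 2) (a : α) :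
    (lp.extendByZero 𝕜 hj).toContinuousLinearMap.adjoint g a = g (j a) := by
  simpa [lp.inner_single_left, lp.extendByZero_single] using
    (lp.extendByZero 𝕜 hj).toContinuousLinearMap.adjoint_inner_right (lp.single 2 a 1) g

end ExtendByZero

section FockSpace

variable {S : Type*}

local notation "H" => lp (fun _ : FreeMonoid S => ℝ) 2

theorem FreeMonoid.of_mul_eq_of_mul_iff {s t : S} {u v : FreeMonoid S} :
    of s * u = of t * v ↔ s = t ∧ u = v := by
  rw [← toList.injective.eq_iff, toList_of_mul, toList_of_mul, List.cons_eq_cons,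
    toList.injective.eq_iff]

theorem FreeAlgebra.basisFreeMonoid_apply (R : Type*) [CommSemiring R] (w : FreeMonoid S) :
    FreeAlgebra.basisFreeMonoid R S w = FreeMonoid.lift (FreeAlgebra.ι R) w := by
  change FreeAlgebra.equivMonoidAlgebraFreeMonoid.symm (MonoidAlgebra.single w 1) = _
  exact (MonoidAlgebra.lift_single _ _ _).trans (one_smul R _)

open FreeMonoid

noncomputable def creation (s : S) : H →L[ℝ] H :=
  (lp.extendByZero ℝ (mul_right_injective (of s))).toContinuousLinearMap

theorem creation_single (s : S) (w : FreeMonoid S) :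
    creation s (lp.single 2 w 1) = lp.single 2 (of s * w) 1 :=
  lp.extendByZero_single (mul_right_injective _) w 1

theorem creation_apply_of_mul (s : S) (g : H) (u : FreeMonoid S) :
    creation s g (of s * u) = g u :=
  lp.extendByZero_apply_apply (mul_right_injective _) g u

theorem creation_apply_of_mul_of_ne {s t : S} (hts : t ≠ s) (g : H) (u : FreeMonoid S) :
    creation s g (of t * u) = 0 := by
  refine lp.extendByZero_apply_of_notMem_range (mul_right_injective _) g ?_
  rintro ⟨v, hv⟩
  exact hts (of_mul_eq_of_mul_iff.1 hv).1.symm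

theorem adjoint_creation_apply (s : S) (g : H) (u : FreeMonoid S) :
    (creation s).adjoint g u = g (of s * u) :=
  lp.adjoint_extendByZero_apply (mul_right_injective _) g u

variable (S) in
noncomputable def freeRep : FreeAlgebra ℝ S →ₐ[ℝ] (H →L[ℝ] H) :=
  FreeAlgebra.lift ℝ fun s => creation s + (creation s).adjoint

theorem freeRep_ι (s : S) :
    freeRep S (FreeAlgebra.ι ℝ s) = creation s + (creation s).adjoint :=
  FreeAlgebra.lift_ι_apply _ _

theorem isSelfAdjoint_freeRep_ι (s : S) : IsSelfAdjoint (freeRep S (FreeAlgebra.ι ℝ s)) := by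
  rw [freeRep_ι, IsSelfAdjoint, star_add, ContinuousLinearMap.star_eq_adjoint,
    ContinuousLinearMap.star_eq_adjoint, ContinuousLinearMap.adjoint_adjoint, add_comm]

theorem freeRep_ι_apply (s : S) (g : H) (u : FreeMonoid S) :
    freeRep S (FreeAlgebra.ι ℝ s) g u = creation s g u + g (of s * u) := by
  rw [freeRep_ι, add_apply, lp.coeFn_add, Pi.add_apply, adjoint_creation_apply]

theorem lp_single_apply_of_length_lt {w u : FreeMonoid S} (h : w.length < u.length) :
    (lp.single 2 w 1 : H) u = 0 := by
  rw [lp.single_apply, Pi.single_eq_of_ne]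
  rintro rfl
  exact h.false

theorem freeRep_lift_ι_single_one_apply_of_length_le (w u : FreeMonoid S)
    (h : w.length ≤ u.length) :
    freeRep S (lift (FreeAlgebra.ι ℝ) w) (lp.single 2 1 1) u = (lp.single 2 w 1 : H) u := by
  induction w using FreeMonoid.inductionOn' generalizing u with
  | one => simp
  | of_mul s w ih =>
    cases u using FreeMonoid.casesOn with
    | one => simp [length_mul, length_of] at h
    | of_mul t u =>
      simp only [length_mul, length_of] at h
      rw [map_mul, lift_eval_of, map_mul, mul_apply_eq_comp, freeRep_ι_apply]
      have h_long :
          freeRep S (lift (FreeAlgebra.ι ℝ) w) (lp.single 2 1 1) (of s * (of t * u)) = 0 := by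
        rw [ih _ (by simp only [length_mul, length_of]; omega),
          lp_single_apply_of_length_lt (by simp only [length_mul, length_of]; omega)]
      rw [h_long, add_zero]
      by_cases hts : t = s
      · subst hts
        rw [creation_apply_of_mul, ih u (by omega)]
        simp [lp.single_apply, Pi.single_apply]
      · rw [creation_apply_of_mul_of_ne hts]
        simp [lp.single_apply, of_mul_eq_of_mul_iff, hts]

theorem freeRep_single_one_apply_of_length_le (a : FreeAlgebra ℝ S) {u : FreeMonoid S}
    (h : ∀ w ∈ ((FreeAlgebra.basisFreeMonoid ℝ S).repr a).support, w.length ≤ u.length) :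
    freeRep S a (lp.single 2 1 1) u = (FreeAlgebra.basisFreeMonoid ℝ S).repr a u := by
  set r := (FreeAlgebra.basisFreeMonoid ℝ S).repr a
  conv_lhs => rw [← (FreeAlgebra.basisFreeMonoid ℝ S).linearCombination_repr a]
  rw [Finsupp.linearCombination_apply, Finsupp.sum, map_sum, sum_apply, lp.coeFn_sum,
    Finset.sum_apply]
  calc ∑ w ∈ r.support, freeRep S (r w • FreeAlgebra.basisFreeMonoid ℝ S w) (lp.single 2 1 1) u
      = ∑ w ∈ r.support, r w * (lp.single 2 w 1 : H) u := by
        refine Finset.sum_congr rfl fun w hw => ?_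
        rw [map_smul, smul_apply, lp.coeFn_smul, Pi.smul_apply, smul_eq_mul,
          FreeAlgebra.basisFreeMonoid_apply,
          freeRep_lift_ι_single_one_apply_of_length_le w u (h w hw)]
    _ = r u := by simp [lp.single_apply, Pi.single_apply, eq_comm (a := (0 : ℝ))]

theorem freeRep_injective : Injective (freeRep S) := by
  refine (injective_iff_map_eq_zero _).2 fun a ha => ?_
  by_contra ha0
  set r := (FreeAlgebra.basisFreeMonoid ℝ S).repr a
  obtain ⟨w, hw, hmax⟩ := r.support.exists_max_image length
    (Finsupp.support_nonempty_iff.2 (by simpa [r] using ha0))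
  have h_coeff := freeRep_single_one_apply_of_length_le a hmax
  rw [ha] at h_coeff
  exact Finsupp.mem_support_iff.1 hw h_coeff.symm

end FockSpace

/-- The free unital associative real algebra on a set `S` embeds into the bounded operators
on the real Hilbert space `ℓ²(FreeMonoid S, ℝ)`: there are bounded operators `ℓ_s` with
`ℓ_s δ_w = δ_{s·w}`, and an injective `ℝ`-algebra homomorphism `φ` sending each generator
`X_s` to the self-adjoint operator `ℓ_s + ℓ_s*`. -/
theorem freeAlgebra_selfAdjoint_representation (S : Type*) :
    ∃ ℓ : S → (lp (fun _ : FreeMonoid S => ℝ) 2 →L[ℝ] lp (fun _ : FreeMonoid S => ℝ) 2),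
      (∀ (s : S) (w : FreeMonoid S),
        ℓ s (lp.single 2 w (1 : ℝ)) = lp.single 2 (FreeMonoid.of s * w) (1 : ℝ)) ∧
      ∃ φ : FreeAlgebra ℝ S →ₐ[ℝ]
          (lp (fun _ : FreeMonoid S => ℝ) 2 →L[ℝ] lp (fun _ : FreeMonoid S => ℝ) 2),
        (∀ s : S, φ (FreeAlgebra.ι ℝ s) = ℓ s + ContinuousLinearMap.adjoint (ℓ s)) ∧
        (∀ s : S, IsSelfAdjoint (φ (FreeAlgebra.ι ℝ s))) ∧
        Function.Injective φ :=
  ⟨creation, creation_single, freeRep S, freeRep_ι, isSelfAdjoint_freeRep_ι, freeRep_injective⟩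
end

section
/- Let S be a set, H := ℓ²(FreeMonoid S, ℝ), and for each s ∈ S let ℓ_s : H → H be the bounded linear operator determined by ℓ_s(δ_w) = δ_{s·w} on the orthonormal basis (δ_w) indexed by words. Let φ be the unique ℝ-algebra homomorphism from FreeAlgebra ℝ S to bounded operators on H with φ(X_s) = ℓ_s + ℓ_s* for all s ∈ S. Then for every nonzero element G of FreeAlgebra ℝ S, the vector φ(G)(δ_ε) is nonzero, where δ_ε is the basis vector at the empty word; in particular φ is injective. -/
/-!
Expand `G` in the basis of words. Since `ℓ_s` raises word length by one and `ℓ_s*` lowers it,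
`φ(w) δ_ε` is `δ_w` plus terms of length `< |w|`. Hence at a word `v` of maximal length in the
support of `G`, the coordinate of `φ(G) δ_ε` is the coefficient of `v` in `G`, which is nonzero.
-/

open scoped InnerProductSpace
open ContinuousLinearMap

theorem lp.apply_eq_inner_single {𝕜 ι : Type*} [RCLike 𝕜] [DecidableEq ι]
    (x : lp (fun _ : ι => 𝕜) 2) (i : ι) : x i = ⟪lp.single 2 i (1 : 𝕜), x⟫_𝕜 := by
  simp [lp.inner_single_left]

theorem FreeAlgebra.lift_eq_monoidAlgebraLift_comp {R A X : Type*} [CommSemiring R] [Semiring A]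
    [Algebra R A] (f : X → A) :
    FreeAlgebra.lift R f = (MonoidAlgebra.lift R A (FreeMonoid X) (FreeMonoid.lift f)).comp
      (FreeAlgebra.equivMonoidAlgebraFreeMonoid : FreeAlgebra R X ≃ₐ[R] _).toAlgHom := by
  ext
  simp [FreeAlgebra.equivMonoidAlgebraFreeMonoid]

local notation "ℓ²[" 𝕜 ", " S "]" => lp (fun _ : FreeMonoid S => 𝕜) 2

namespace FullFockSpace

variable {𝕜 S : Type*} [RCLike 𝕜]

def IsCreation (ℓ : S → ℓ²[𝕜, S] →L[𝕜] ℓ²[𝕜, S]) : Prop :=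
  ∀ (s : S) (w : FreeMonoid S),
    ℓ s (lp.single 2 w (1 : 𝕜)) = lp.single 2 (FreeMonoid.of s * w) (1 : 𝕜)

noncomputable def wordOperator (ℓ : S → ℓ²[𝕜, S] →L[𝕜] ℓ²[𝕜, S]) :
    FreeMonoid S →* (ℓ²[𝕜, S] →L[𝕜] ℓ²[𝕜, S]) :=
  FreeMonoid.lift fun s => ℓ s + adjoint (ℓ s)

variable {ℓ : S → ℓ²[𝕜, S] →L[𝕜] ℓ²[𝕜, S]}

theorem wordOperator_of_mul (s : S) (w : FreeMonoid S) :
    wordOperator ℓ (FreeMonoid.of s * w) = (ℓ s + adjoint (ℓ s)) * wordOperator ℓ w := by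
  rw [map_mul, wordOperator, FreeMonoid.lift_eval_of]

namespace IsCreation

theorem adjoint_apply_apply (hℓ : IsCreation ℓ) (s : S) (x : ℓ²[𝕜, S]) (v : FreeMonoid S) :
    adjoint (ℓ s) x v = x (FreeMonoid.of s * v) := by
  rw [lp.apply_eq_inner_single, adjoint_inner_right, hℓ, ← lp.apply_eq_inner_single]

theorem adjoint_single_of_mul (hℓ : IsCreation ℓ) (s : S) (v : FreeMonoid S) :
    adjoint (ℓ s) (lp.single 2 (FreeMonoid.of s * v) 1) = lp.single 2 v (1 : 𝕜) := by
  ext u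
  simp [hℓ.adjoint_apply_apply, Pi.single_apply]

theorem adjoint_single_eq_zero (hℓ : IsCreation ℓ) {s : S} {u : FreeMonoid S}
    (hu : ∀ v, u ≠ FreeMonoid.of s * v) : adjoint (ℓ s) (lp.single 2 u 1 : ℓ²[𝕜, S]) = 0 := by
  ext v
  simp [hℓ.adjoint_apply_apply, (hu v).symm]

theorem apply_of_mul (hℓ : IsCreation ℓ) (s : S) (x : ℓ²[𝕜, S]) (v : FreeMonoid S) :
    ℓ s x (FreeMonoid.of s * v) = x v := by
  rw [lp.apply_eq_inner_single, ← adjoint_inner_left, hℓ.adjoint_single_of_mul,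
    ← lp.apply_eq_inner_single]

theorem apply_eq_zero (hℓ : IsCreation ℓ) {s : S} (x : ℓ²[𝕜, S]) {u : FreeMonoid S}
    (hu : ∀ v, u ≠ FreeMonoid.of s * v) : ℓ s x u = 0 := by
  rw [lp.apply_eq_inner_single, ← adjoint_inner_left, hℓ.adjoint_single_eq_zero hu,
    inner_zero_left]

theorem wordOperator_vacuum_apply (hℓ : IsCreation ℓ) {w v : FreeMonoid S}
    (hwv : w.length ≤ v.length) :
    wordOperator ℓ w (lp.single 2 1 1) v = (lp.single 2 w 1 : ℓ²[𝕜, S]) v := by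
  induction w using FreeMonoid.recOn generalizing v with
  | one => rfl
  | of_mul s w ih =>
    rw [FreeMonoid.length_mul, FreeMonoid.length_of] at hwv
    have hlen : w.length ≤ (FreeMonoid.of s * v).length := by
      rw [FreeMonoid.length_mul, FreeMonoid.length_of]; omega
    have hne : FreeMonoid.of s * v ≠ w := by
      rintro rfl
      simp at hwv; omega
    have hannihilation : adjoint (ℓ s) (wordOperator ℓ w (lp.single 2 1 1)) v = 0 := by
      rw [hℓ.adjoint_apply_apply, ih hlen, lp.single_apply_ne _ _ _ hne]
    rw [wordOperator_of_mul, mul_apply_eq_comp, add_apply, lp.coeFn_add, Pi.add_apply,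
      hannihilation, add_zero]
    by_cases hv : ∃ v', v = FreeMonoid.of s * v'
    · obtain ⟨v', rfl⟩ := hv
      rw [FreeMonoid.length_mul, FreeMonoid.length_of] at hwv
      rw [hℓ.apply_of_mul, ih (by omega)]
      simp [Pi.single_apply]
    · rw [hℓ.apply_eq_zero _ (not_exists.mp hv), lp.single_apply_ne _ _ _ (not_exists.mp hv w)]

theorem lift_wordOperator_vacuum_apply (hℓ : IsCreation ℓ) (F : MonoidAlgebra 𝕜 (FreeMonoid S))
    {v : FreeMonoid S} (hv : ∀ w ∈ F.coeff.support, w.length ≤ v.length) :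
    MonoidAlgebra.lift 𝕜 _ _ (wordOperator ℓ) F (lp.single 2 1 1) v = F.coeff v := by
  rw [MonoidAlgebra.lift_apply, Finsupp.sum, sum_apply, lp.coeFn_sum, Finset.sum_apply]
  simp_rw [smul_apply, lp.coeFn_smul, Pi.smul_apply]
  rw [Finset.sum_congr rfl fun w hw => by rw [hℓ.wordOperator_vacuum_apply (hv w hw)]]
  simp [Pi.single_apply, eq_comm]

theorem lift_wordOperator_vacuum_ne_zero (hℓ : IsCreation ℓ) {F : MonoidAlgebra 𝕜 (FreeMonoid S)}
    (hF : F ≠ 0) : MonoidAlgebra.lift 𝕜 _ _ (wordOperator ℓ) F (lp.single 2 1 1) ≠ 0 := by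
  obtain ⟨v, hv, hmax⟩ := F.coeff.support.exists_max_image FreeMonoid.length
    (Finsupp.support_nonempty_iff.mpr (MonoidAlgebra.coeff_eq_zero.not.mpr hF))
  intro h
  have := hℓ.lift_wordOperator_vacuum_apply F hmax
  rw [h] at this
  exact Finsupp.mem_support_iff.mp hv this.symm

end IsCreation
end FullFockSpace

open FullFockSpace in
/-- Let `ℓ_s` be the bounded operators on `ℓ²(FreeMonoid S, ℝ)` with `ℓ_s δ_w = δ_{s·w}`,
and let `φ` be the unique `ℝ`-algebra homomorphism on the free algebra with
`φ(X_s) = ℓ_s + ℓ_s*`.  Then `φ(G) δ_ε ≠ 0` for every nonzero `G`; in particular `φ`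
is injective. -/
theorem freeAlgebra_representation_injective (S : Type*)
    (ℓ : S → (lp (fun _ : FreeMonoid S => ℝ) 2 →L[ℝ] lp (fun _ : FreeMonoid S => ℝ) 2))
    (hℓ : ∀ (s : S) (w : FreeMonoid S),
      ℓ s (lp.single 2 w (1 : ℝ)) = lp.single 2 (FreeMonoid.of s * w) (1 : ℝ)) :
    (∀ G : FreeAlgebra ℝ S, G ≠ 0 →
      (FreeAlgebra.lift ℝ (fun s => ℓ s + ContinuousLinearMap.adjoint (ℓ s))) G
        (lp.single 2 (1 : FreeMonoid S) (1 : ℝ)) ≠ 0) ∧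
    Function.Injective
      (FreeAlgebra.lift ℝ (fun s => ℓ s + ContinuousLinearMap.adjoint (ℓ s))) := by
  have hvacuum : ∀ G : FreeAlgebra ℝ S, G ≠ 0 →
      FreeAlgebra.lift ℝ (fun s => ℓ s + adjoint (ℓ s)) G (lp.single 2 1 1) ≠ 0 := by
    intro G hG
    rw [FreeAlgebra.lift_eq_monoidAlgebraLift_comp]
    exact IsCreation.lift_wordOperator_vacuum_ne_zero hℓ
      (FreeAlgebra.equivMonoidAlgebraFreeMonoid.map_ne_zero_iff.mpr hG)
  refine ⟨hvacuum, (injective_iff_map_eq_zero _).mpr fun G hG => ?_⟩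
  exact not_imp_not.mp (hvacuum G) (by rw [hG, zero_apply])
end

section
/- Let A be a C*-algebra, let e, f ∈ A be self-adjoint idempotents with e·f = 0, and let x ∈ A be self-adjoint with e·x + x·e = x and f·x + x·f = x (i.e. e ∘ x = f ∘ x = (1/2)x for the Jordan product). Then x² = e·x²·e + f·x²·f, and ‖e·x²·e‖ = ‖f·x²·f‖ = ‖x‖². -/
/-!
From `e ∘ x = f ∘ x = ½ x` and `e f = 0` one gets `x f = e x` and `x e = f x`, so that
`x = e x + f x` and the cross terms of `x²` vanish: `x² = e x² e + f x² f`. Both corners are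
`(e x)(e x)*`, resp. `(f x)(f x)*` with `f x = (e x)*`, so they have norm `‖e x‖² ≤ ‖x‖²`.
Conversely the two corners are orthogonal self-adjoint elements, and for such `a, b` the
`2ⁿ`-th powers of `a + b` split as `a^(2ⁿ) + b^(2ⁿ)`; the C*-identity then gives
`‖a + b‖ ^ 2ⁿ ≤ 2 max(‖a‖, ‖b‖) ^ 2ⁿ` for all `n`, hence `‖x‖² = ‖a + b‖ ≤ ‖e x‖²`.
-/

theorem le_of_forall_pow_two_pow_le_mul {s M : ℝ} (C : ℝ) (hM : 0 ≤ M)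
    (h : ∀ n : ℕ, s ^ 2 ^ n ≤ C * M ^ 2 ^ n) : s ≤ M := by
  rcases hM.eq_or_lt with rfl | hM
  · simpa using h 0
  by_contra! hsM
  have hr : 1 < s / M := (one_lt_div hM).mpr hsM
  obtain ⟨n, hn⟩ := pow_unbounded_of_one_lt C hr
  have : (s / M) ^ 2 ^ n ≤ C := by
    rw [div_pow, div_le_iff₀ (pow_pos hM _)]
    exact h n
  linarith [pow_le_pow_right₀ hr.le (Nat.lt_two_pow_self (n := n)).le]

theorem IsSelfAdjoint.mul_self {R : Type*} [Mul R] [StarMul R] {x : R} (hx : IsSelfAdjoint x) :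
    IsSelfAdjoint (x * x) := by
  simpa only [hx.star_eq] using IsSelfAdjoint.star_mul_self x

section NonUnitalRing

variable {R : Type*} [NonUnitalRing R]

theorem iterate_mul_self_add_of_mul_eq_zero {a b : R} (hab : a * b = 0) (hba : b * a = 0)
    (n : ℕ) : (fun z => z * z)^[n] (a + b) = (fun z => z * z)^[n] a + (fun z => z * z)^[n] b := by
  induction n generalizing a b with
  | zero => rfl
  | succ n ih =>
    have hsq : (a + b) * (a + b) = a * a + b * b := by
      simp only [add_mul, mul_add, hab, hba, add_zero, zero_add]
    simp only [Function.iterate_succ_apply, hsq]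
    exact ih (by rw [mul_assoc, ← mul_assoc a b, hab, zero_mul, mul_zero])
      (by rw [mul_assoc, ← mul_assoc b a, hba, zero_mul, mul_zero])

variable {e f x : R}

theorem mul_eq_mul_of_jordan_half (hef : e * f = 0)
    (hex : e * x + x * e = x) (hfx : f * x + x * f = x) : x * f = e * x :=
  calc x * f = e * x * f := by
        simpa only [add_mul, mul_assoc, hef, mul_zero, add_zero] using (congrArg (· * f) hex).symm
    _ = e * x := by
        simpa only [mul_add, ← mul_assoc, hef, zero_mul, zero_add] using congrArg (e * ·) hfx

theorem mul_self_eq_add_corners_of_jordan_half (hef : e * f = 0) (hfe : f * e = 0)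
    (hex : e * x + x * e = x) (hfx : f * x + x * f = x) :
    x * x = e * (x * x) * e + f * (x * x) * f := by
  have hxf := mul_eq_mul_of_jordan_half hef hex hfx
  have hxe := mul_eq_mul_of_jordan_half hfe hfx hex
  have hsum_left : e * x + f * x = x := hxe ▸ hex
  have hsum_right : x * e + x * f = x := hxe ▸ hfx
  have cross_ef : e * x * (x * f) = 0 := by
    rw [hxf, mul_assoc, ← mul_assoc x e, hxe, mul_assoc, ← mul_assoc e f, hef, zero_mul]
  have cross_fe : f * x * (x * e) = 0 := by
    rw [hxe, mul_assoc, ← mul_assoc x f, hxf, mul_assoc, ← mul_assoc f e, hfe, zero_mul]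
  calc x * x = (e * x + f * x) * (x * e + x * f) := by rw [hsum_left, hsum_right]
    _ = e * x * (x * e) + f * x * (x * f) := by
        simp only [add_mul, mul_add, cross_ef, cross_fe, add_zero, zero_add]
    _ = e * (x * x) * e + f * (x * x) * f := by simp only [mul_assoc]

end NonUnitalRing

section CStarRing

variable {A : Type*} [NonUnitalNormedRing A] [StarRing A] [CStarRing A]

theorem IsSelfAdjoint.norm_iterate_mul_self {z : A} (hz : IsSelfAdjoint z) (n : ℕ) :
    ‖(fun w => w * w)^[n] z‖ = ‖z‖ ^ 2 ^ n := by
  induction n generalizing z with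
  | zero => simp
  | succ n ih =>
    rw [Function.iterate_succ_apply, ih hz.mul_self, hz.norm_mul_self, ← pow_mul, pow_succ']

theorem IsSelfAdjoint.norm_add_le_max_of_mul_eq_zero {a b : A} (ha : IsSelfAdjoint a)
    (hb : IsSelfAdjoint b) (hab : a * b = 0) : ‖a + b‖ ≤ max ‖a‖ ‖b‖ := by
  have hba : b * a = 0 := by simpa [ha.star_eq, hb.star_eq] using congrArg star hab
  refine le_of_forall_pow_two_pow_le_mul 2 (le_max_of_le_left (norm_nonneg a)) fun n => ?_
  calc ‖a + b‖ ^ 2 ^ n = ‖(fun z => z * z)^[n] a + (fun z => z * z)^[n] b‖ := by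
        rw [← (ha.add hb).norm_iterate_mul_self, iterate_mul_self_add_of_mul_eq_zero hab hba]
    _ ≤ ‖a‖ ^ 2 ^ n + ‖b‖ ^ 2 ^ n := by
        rw [← ha.norm_iterate_mul_self, ← hb.norm_iterate_mul_self]
        exact norm_add_le _ _
    _ ≤ 2 * max ‖a‖ ‖b‖ ^ 2 ^ n := by
        rw [two_mul]
        gcongr
        exacts [le_max_left _ _, le_max_right _ _]

theorem norm_mul_mul_self_mul {e x : A} (he : IsSelfAdjoint e) (hx : IsSelfAdjoint x) :
    ‖e * (x * x) * e‖ = ‖e * x‖ ^ 2 := by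
  have : e * (x * x) * e = e * x * star (e * x) := by
    simp only [star_mul, he.star_eq, hx.star_eq, mul_assoc]
  rw [this, CStarRing.norm_self_mul_star, sq]

end CStarRing

theorem peirce_half_lemma_general
    {A : Type*} [NonUnitalNormedRing A] [StarRing A] [CStarRing A]
    (e f x : A)
    (he : IsSelfAdjoint e) (he2 : e * e = e)
    (hf : IsSelfAdjoint f)
    (hef : e * f = 0)
    (hx : IsSelfAdjoint x)
    (hex : e * x + x * e = x) (hfx : f * x + x * f = x) :
    x * x = e * (x * x) * e + f * (x * x) * f ∧
    ‖e * (x * x) * e‖ = ‖x‖ ^ 2 ∧ ‖f * (x * x) * f‖ = ‖x‖ ^ 2 := by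
  have hfe : f * e = 0 := by simpa [he.star_eq, hf.star_eq] using congrArg star hef
  have hdec := mul_self_eq_add_corners_of_jordan_half hef hfe hex hfx
  have hfx_eq : ‖f * x‖ = ‖e * x‖ := by
    rw [← mul_eq_mul_of_jordan_half hfe hfx hex, ← norm_star, star_mul, he.star_eq, hx.star_eq]
  have hcorner_e := norm_mul_mul_self_mul he hx
  have hcorner_f : ‖f * (x * x) * f‖ = ‖e * x‖ ^ 2 := by rw [norm_mul_mul_self_mul hf hx, hfx_eq]
  have hle : ‖e * x‖ ≤ ‖x‖ := (norm_mul_le e x).trans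
    (mul_le_of_le_one_left (norm_nonneg x) (IsStarProjection.norm_le e ⟨he2, he⟩))
  have hge : ‖x‖ ^ 2 ≤ ‖e * x‖ ^ 2 :=
    calc ‖x‖ ^ 2 = ‖e * (x * x) * e + f * (x * x) * f‖ := by rw [← hx.norm_mul_self, ← hdec]
      _ ≤ max ‖e * (x * x) * e‖ ‖f * (x * x) * f‖ :=
          (hx.mul_self.conjugate_self he).norm_add_le_max_of_mul_eq_zero
            (hx.mul_self.conjugate_self hf)
            (by rw [mul_assoc, mul_assoc f, ← mul_assoc e f, hef, zero_mul, mul_zero])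
      _ = ‖e * x‖ ^ 2 := by rw [hcorner_e, hcorner_f, max_self]
  have hnorm : ‖e * x‖ ^ 2 = ‖x‖ ^ 2 := le_antisymm (pow_le_pow_left₀ (norm_nonneg _) hle 2) hge
  exact ⟨hdec, hcorner_e.trans hnorm, hcorner_f.trans hnorm⟩

/-- Peirce-½ lemma in a C*-algebra: if `e, f` are orthogonal self-adjoint idempotents and
`x` is self-adjoint with `e ∘ x = f ∘ x = ½ x` (i.e. `ex + xe = x` and `fx + xf = x`),
then `x² = e x² e + f x² f` and `‖e x² e‖ = ‖f x² f‖ = ‖x‖²`. -/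
theorem peirce_half_lemma
    {A : Type*} [NonUnitalNormedRing A] [StarRing A] [CStarRing A] [CompleteSpace A]
    (e f x : A)
    (he : IsSelfAdjoint e) (he2 : e * e = e)
    (hf : IsSelfAdjoint f) (hf2 : f * f = f)
    (hef : e * f = 0)
    (hx : IsSelfAdjoint x)
    (hex : e * x + x * e = x) (hfx : f * x + x * f = x) :
    x * x = e * (x * x) * e + f * (x * x) * f ∧
    ‖e * (x * x) * e‖ = ‖x‖ ^ 2 ∧ ‖f * (x * x) * f‖ = ‖x‖ ^ 2 :=
  peirce_half_lemma_general e f x he he2 hf hef hx hex hfx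
end

section
/- Let A := C([0,1], M₂(ℝ)) be the Banach algebra of continuous functions from [0,1] to real 2×2 matrices with the supremum norm, and define p₁, p₂ ∈ A by p₁(t) := [[1,0],[0,0]] and p₂(t) := [[t, √(t(1−t))],[√(t(1−t)), 1−t]]. Let J := {f ∈ A : f(t) is a symmetric matrix for every t ∈ [0,1], and f(0) and f(1) are diagonal matrices}. Then J equals the smallest norm-closed real-linear subspace of A that contains the constant function 1, p₁ and p₂ and is closed under the Jordan product f ∘ g := (1/2)(f·g + g·f). -/
/-!
For projections p₁, p₂ the square (p₁ - p₂)² commutes with both; here it is (1 - t)·1. So a closed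
Jordan subspace D containing 1, p₁, p₂ contains t·1, hence by Weierstrass a·1 for every
a ∈ C[0,1], and since (a·1) ∘ y = a·y, D is a C[0,1]-module. Then {c | c·w ∈ D}, with
w = [[0,1],[1,0]], is a closed ideal of C[0,1]; it contains √(t(1-t)), the off-diagonal entry of
p₂, so it contains every function vanishing at 0 and 1. Writing a symmetric f as
f₀₀·p₁ + f₁₁·(1 - p₁) + f₀₁·w puts every f ∈ J in D, and J itself is such a subspace.
-/

def Submodule.IsJordanClosed {A : Type*} [Mul A] [AddCommMonoid A] [Module ℝ A]
    (D : Submodule ℝ A) : Prop :=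
  ∀ a ∈ D, ∀ b ∈ D, (2 : ℝ)⁻¹ • (a * b + b * a) ∈ D

theorem Submodule.IsJordanClosed.mul_self_mem {A : Type*} [Mul A] [AddCommMonoid A]
    [Module ℝ A] {D : Submodule ℝ A} (hD : D.IsJordanClosed) {a : A} (ha : a ∈ D) :
    a * a ∈ D := by
  simpa [← two_smul ℝ (a * a), smul_smul] using hD a ha a ha

theorem ContinuousMap.continuous_smul_const {X M : Type*} [TopologicalSpace X]
    [TopologicalSpace M] [AddCommMonoid M] [Module ℝ M] [ContinuousSMul ℝ M] (m : M) :
    Continuous fun a : C(X, ℝ) => a • ContinuousMap.const X m :=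
  ContinuousMap.continuous_postcomp ⟨fun r : ℝ => r • m, by fun_prop⟩

theorem Subalgebra.eq_top_of_isClosed_of_X_mem {a b : ℝ} (S : Subalgebra ℝ C(Set.Icc a b, ℝ))
    (hS : IsClosed (S : Set C(Set.Icc a b, ℝ)))
    (hX : Polynomial.toContinuousMapOnAlgHom (Set.Icc a b) Polynomial.X ∈ S) : S = ⊤ := by
  have hpoly : polynomialFunctions (Set.Icc a b) ≤ S := by
    rw [polynomialFunctions.eq_adjoin_X]
    exact Algebra.adjoin_le (Set.singleton_subset_iff.mpr hX)
  rw [eq_top_iff, ← polynomialFunctions_closure_eq_top a b]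
  exact Subalgebra.topologicalClosure_minimal hpoly hS

theorem ContinuousMap.mem_ideal_of_isClosed_of_vanishing {X 𝕜 : Type*} [TopologicalSpace X]
    [CompactSpace X] [T2Space X] [RCLike 𝕜] {I : Ideal C(X, 𝕜)}
    (hI : IsClosed (I : Set C(X, 𝕜))) {s c : C(X, 𝕜)} (hs : s ∈ I)
    (hc : ∀ x, s x = 0 → c x = 0) : c ∈ I := by
  have hcl : c ∈ I.closure := by
    rw [← idealOfSet_ofIdeal_eq_closure, mem_idealOfSet]
    exact fun x hx => hc x (notMem_setOfIdeal.mp hx hs)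
  rwa [← SetLike.mem_coe, Ideal.coe_closure, hI.closure_eq] at hcl

namespace Submodule.IsJordanClosed

variable {X R : Type*} [TopologicalSpace X] [Ring R] [TopologicalSpace R] [IsTopologicalRing R]
  [Algebra ℝ R] [ContinuousSMul ℝ R]

theorem smul_mem {D : Submodule ℝ C(X, R)} (hD : D.IsJordanClosed)
    {a : C(X, ℝ)} (ha : a • (1 : C(X, R)) ∈ D) {y : C(X, R)} (hy : y ∈ D) : a • y ∈ D := by
  convert hD _ ha y hy using 1
  ext t
  simp only [ContinuousMap.smul_apply', ContinuousMap.smul_apply, ContinuousMap.add_apply,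
    ContinuousMap.mul_apply, ContinuousMap.one_apply, smul_one_mul, mul_smul_one, ← two_smul ℝ,
    smul_smul]
  rw [inv_mul_cancel_left₀ two_ne_zero]

theorem smul_one_mem {a b : ℝ} {D : Submodule ℝ C(Set.Icc a b, R)}
    (hDc : IsClosed (D : Set C(Set.Icc a b, R))) (hD : D.IsJordanClosed) (h1 : 1 ∈ D)
    (hX : Polynomial.toContinuousMapOnAlgHom (Set.Icc a b) Polynomial.X •
      (1 : C(Set.Icc a b, R)) ∈ D)
    (f : C(Set.Icc a b, ℝ)) : f • (1 : C(Set.Icc a b, R)) ∈ D := by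
  let S : Subalgebra ℝ C(Set.Icc a b, ℝ) :=
    { carrier := {f | f • (1 : C(Set.Icc a b, R)) ∈ D}
      mul_mem' := fun {f g} hf hg => by
        show (f * g) • _ ∈ D
        convert hD _ hf _ hg using 1
        ext t
        simp [mul_comm (f t), ← two_smul ℝ, smul_smul]
      add_mem' := fun hf hg => by simpa [add_smul] using add_mem hf hg
      algebraMap_mem' := fun r => by
        have : algebraMap ℝ C(Set.Icc a b, ℝ) r • (1 : C(Set.Icc a b, R)) = r • 1 := by
          ext t; simp
        show _ ∈ D
        rw [this]
        exact D.smul_mem r h1 }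
  have hS : S = ⊤ :=
    S.eq_top_of_isClosed_of_X_mem (hDc.preimage (ContinuousMap.continuous_smul_const 1)) hX
  exact (hS ▸ Algebra.mem_top : f ∈ S)

end Submodule.IsJordanClosed

namespace Matrix

variable {n α : Type*}

theorem IsDiag.mul [Fintype n] [NonUnitalNonAssocSemiring α] {A B : Matrix n n α}
    (hA : A.IsDiag) (hB : B.IsDiag) : (A * B).IsDiag := by
  intro i j hij
  rw [mul_apply]
  refine Finset.sum_eq_zero fun k _ => ?_
  by_cases hik : i = k
  · rw [← hik, hB hij, mul_zero]
  · rw [hA hik, zero_mul]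

theorem IsSymm.mul_add_mul [Fintype n] [CommSemiring α] {A B : Matrix n n α}
    (hA : A.IsSymm) (hB : B.IsSymm) : (A * B + B * A).IsSymm := by
  simp [IsSymm, transpose_mul, hA.eq, hB.eq, add_comm]

theorem isDiag_fin_two_iff [Zero α] {A : Matrix (Fin 2) (Fin 2) α} :
    A.IsDiag ↔ A 0 1 = 0 ∧ A 1 0 = 0 := by
  refine ⟨fun h => ⟨h (by decide), h (by decide)⟩, fun ⟨h01, h10⟩ i j hij => ?_⟩
  fin_cases i <;> fin_cases j <;> simp_all

theorem isSymm_fin_two_iff {A : Matrix (Fin 2) (Fin 2) α} : A.IsSymm ↔ A 1 0 = A 0 1 := by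
  refine ⟨fun h => h.apply 0 1, fun h => IsSymm.ext fun i j => ?_⟩
  fin_cases i <;> fin_cases j <;> simp [h]

theorem isClosed_setOf_isDiag [TopologicalSpace α] [T1Space α] [Zero α] :
    IsClosed {A : Matrix n n α | A.IsDiag} := by
  have : {A : Matrix n n α | A.IsDiag} = ⋂ i, ⋂ j, ⋂ (_ : i ≠ j), {A | A i j = 0} := by
    ext; simp [IsDiag, Pairwise]
  rw [this]
  exact isClosed_iInter fun i => isClosed_iInter fun j => isClosed_iInter fun _ =>
    isClosed_singleton.preimage (continuous_id.matrix_elem i j)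

theorem isClosed_setOf_isSymm [TopologicalSpace α] [T2Space α] :
    IsClosed {A : Matrix n n α | A.IsSymm} :=
  isClosed_eq continuous_id.matrix_transpose continuous_id

end Matrix

section SymmetricDiagonalAt

variable {X : Type*} [TopologicalSpace X]

def symmetricDiagonalAt (n : Type*) (x₀ x₁ : X) : Submodule ℝ C(X, Matrix n n ℝ) where
  carrier := {f | (∀ t, (f t).IsSymm) ∧ (f x₀).IsDiag ∧ (f x₁).IsDiag}
  add_mem' := fun ⟨hf, hf₀, hf₁⟩ ⟨hg, hg₀, hg₁⟩ =>
    ⟨fun t => (hf t).add (hg t), hf₀.add hg₀, hf₁.add hg₁⟩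
  zero_mem' := ⟨fun _ => Matrix.isSymm_zero, Matrix.isDiag_zero, Matrix.isDiag_zero⟩
  smul_mem' := fun r _ ⟨hf, hf₀, hf₁⟩ => ⟨fun t => (hf t).smul r, hf₀.smul r, hf₁.smul r⟩

variable {n : Type*} (x₀ x₁ : X)

theorem isClosed_symmetricDiagonalAt :
    IsClosed (symmetricDiagonalAt n x₀ x₁ : Set C(X, Matrix n n ℝ)) := by
  have hsymm : IsClosed {f : C(X, Matrix n n ℝ) | ∀ t, (f t).IsSymm} := by
    simpa only [Set.ofPred_forall, Set.preimage_ofPred_eq] using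
      isClosed_iInter fun t => Matrix.isClosed_setOf_isSymm.preimage (continuous_eval_const t)
  exact hsymm.inter ((Matrix.isClosed_setOf_isDiag.preimage (continuous_eval_const x₀)).inter
    (Matrix.isClosed_setOf_isDiag.preimage (continuous_eval_const x₁)))

theorem isJordanClosed_symmetricDiagonalAt [Fintype n] :
    (symmetricDiagonalAt n x₀ x₁).IsJordanClosed :=
  fun _ ⟨hf, hf₀, hf₁⟩ _ ⟨hg, hg₀, hg₁⟩ =>
    ⟨fun t => ((hf t).mul_add_mul (hg t)).smul (2 : ℝ)⁻¹,
      ((hf₀.mul hg₀).add (hg₀.mul hf₀)).smul (2 : ℝ)⁻¹,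
      ((hf₁.mul hg₁).add (hg₁.mul hf₁)).smul (2 : ℝ)⁻¹⟩

theorem one_mem_symmetricDiagonalAt [DecidableEq n] : 1 ∈ symmetricDiagonalAt n x₀ x₁ :=
  ⟨fun _ => Matrix.isSymm_one, Matrix.isDiag_one, Matrix.isDiag_one⟩

end SymmetricDiagonalAt

local notation "𝕀" => Set.Icc (0 : ℝ) 1

local notation "M₂" => Matrix (Fin 2) (Fin 2) ℝ

theorem smul_mem_of_projections (p₁ p₂ : C(𝕀, M₂)) (hp₁ : ∀ t : 𝕀, p₁ t = !![1, 0; 0, 0])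
    (hp₂ : ∀ t : 𝕀, p₂ t = !![(t : ℝ), √(t * (1 - t)); √(t * (1 - t)), 1 - (t : ℝ)])
    {D : Submodule ℝ C(𝕀, M₂)} (hDc : IsClosed (D : Set C(𝕀, M₂))) (hD : D.IsJordanClosed)
    (h1 : 1 ∈ D) (hp₁D : p₁ ∈ D) (hp₂D : p₂ ∈ D) (a : C(𝕀, ℝ)) {y : C(𝕀, M₂)} (hy : y ∈ D) :
    a • y ∈ D := by
  have hsqrt (t : 𝕀) : √((t : ℝ) * (1 - t)) * √((t : ℝ) * (1 - t)) = t * (1 - t) :=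
    Real.mul_self_sqrt (mul_nonneg t.2.1 (sub_nonneg.mpr t.2.2))
  have hcentral : Polynomial.toContinuousMapOnAlgHom 𝕀 Polynomial.X • 1 =
      1 - (p₁ - p₂) * (p₁ - p₂) := by
    ext t i j
    fin_cases i <;> fin_cases j <;> simp [hp₁ t, hp₂ t, hsqrt] <;> ring
  have hX := hcentral ▸ sub_mem h1 (hD.mul_self_mem (sub_mem hp₁D hp₂D))
  exact hD.smul_mem (hD.smul_one_mem hDc h1 hX a) hy

theorem symmetricDiagonalAt_le_of_projections (p₁ p₂ : C(𝕀, M₂))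
    (hp₁ : ∀ t : 𝕀, p₁ t = !![1, 0; 0, 0])
    (hp₂ : ∀ t : 𝕀, p₂ t = !![(t : ℝ), √(t * (1 - t)); √(t * (1 - t)), 1 - (t : ℝ)])
    {D : Submodule ℝ C(𝕀, M₂)} (hDc : IsClosed (D : Set C(𝕀, M₂))) (hD : D.IsJordanClosed)
    (h1 : 1 ∈ D) (hp₁D : p₁ ∈ D) (hp₂D : p₂ ∈ D) :
    symmetricDiagonalAt (Fin 2) ⟨0, Set.left_mem_Icc.mpr zero_le_one⟩
      ⟨1, Set.right_mem_Icc.mpr zero_le_one⟩ ≤ D := by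
  intro f hf
  have hsmul := smul_mem_of_projections p₁ p₂ hp₁ hp₂ hDc hD h1 hp₁D hp₂D
  let w := ContinuousMap.const 𝕀 !![(0 : ℝ), 1; 1, 0]
  let I : Ideal C(𝕀, ℝ) :=
    (Submodule.mk D.toAddSubmonoid fun a _ hy => hsmul a hy).comap
      (LinearMap.toSpanSingleton _ _ w)
  have hIc : IsClosed (I : Set C(𝕀, ℝ)) := hDc.preimage (ContinuousMap.continuous_smul_const _)
  let s : C(𝕀, ℝ) := ⟨fun t => √(t * (1 - t)), by fun_prop⟩
  have hs : s ∈ I := by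
    let id01 := Polynomial.toContinuousMapOnAlgHom 𝕀 Polynomial.X
    have hoffdiag : s • w = p₂ - id01 • p₁ - (1 - id01) • (1 - p₁) := by
      ext t i j
      fin_cases i <;> fin_cases j <;> simp [s, w, id01, hp₁ t, hp₂ t]
    show s • w ∈ D
    rw [hoffdiag]
    exact sub_mem (sub_mem hp₂D (hsmul _ hp₁D)) (hsmul _ (sub_mem h1 hp₁D))
  let entry (i j : Fin 2) : C(𝕀, ℝ) := ⟨fun t => f t i j, by fun_prop⟩
  have hf₀₁ : entry 0 1 ∈ I := by
    refine ContinuousMap.mem_ideal_of_isClosed_of_vanishing hIc hs fun t ht => ?_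
    have ht' : (t : ℝ) * (1 - t) = 0 :=
      (Real.sqrt_eq_zero (mul_nonneg t.2.1 (sub_nonneg.mpr t.2.2))).mp ht
    rcases mul_eq_zero.mp ht' with ht₀ | ht₁
    · rw [show t = ⟨0, Set.left_mem_Icc.mpr zero_le_one⟩ from Subtype.ext ht₀]
      exact hf.2.1 zero_ne_one
    · rw [show t = ⟨1, Set.right_mem_Icc.mpr zero_le_one⟩ from
        Subtype.ext (sub_eq_zero.mp ht₁).symm]
      exact hf.2.2 zero_ne_one
  have hdecomp : f = entry 0 0 • p₁ + entry 1 1 • (1 - p₁) + entry 0 1 • w := by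
    ext t i j
    fin_cases i <;> fin_cases j <;> simp [entry, w, hp₁ t, (hf.1 t).apply 0 1]
  rw [hdecomp]
  exact add_mem (add_mem (hsmul _ hp₁D) (hsmul _ (sub_mem h1 hp₁D))) hf₀₁

/-- The Raeburn–Sinclair generation statement: in `A = C([0,1], M₂(ℝ))`, the set
`J = {f : f(t) symmetric for all t, f(0) and f(1) diagonal}` equals the smallest
norm-closed real-linear subspace of `A` containing `1`, `p₁`, `p₂` and closed under
the Jordan product `f ∘ g = ½(fg + gf)`, where `p₁(t) = [[1,0],[0,0]]` and
`p₂(t) = [[t, √(t(1−t))],[√(t(1−t)), 1−t]]`. -/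
theorem raeburn_sinclair_JB_generation
    (p₁ p₂ : C(Set.Icc (0:ℝ) 1, Matrix (Fin 2) (Fin 2) ℝ))
    (hp₁ : ∀ t : Set.Icc (0:ℝ) 1, p₁ t = !![1, 0; 0, 0])
    (hp₂ : ∀ t : Set.Icc (0:ℝ) 1,
      p₂ t = !![(t : ℝ), Real.sqrt ((t : ℝ) * (1 - (t : ℝ)));
                Real.sqrt ((t : ℝ) * (1 - (t : ℝ))), 1 - (t : ℝ)]) :
    {f : C(Set.Icc (0:ℝ) 1, Matrix (Fin 2) (Fin 2) ℝ) |
        (∀ t, (f t).IsSymm) ∧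
        ((f ⟨0, Set.left_mem_Icc.mpr zero_le_one⟩) 0 1 = 0 ∧
         (f ⟨0, Set.left_mem_Icc.mpr zero_le_one⟩) 1 0 = 0) ∧
        ((f ⟨1, Set.right_mem_Icc.mpr zero_le_one⟩) 0 1 = 0 ∧
         (f ⟨1, Set.right_mem_Icc.mpr zero_le_one⟩) 1 0 = 0)} =
    ⋂₀ {D : Set C(Set.Icc (0:ℝ) 1, Matrix (Fin 2) (Fin 2) ℝ) |
        IsClosed D ∧
        (0 : C(Set.Icc (0:ℝ) 1, Matrix (Fin 2) (Fin 2) ℝ)) ∈ D ∧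
        (∀ f ∈ D, ∀ g ∈ D, f + g ∈ D) ∧
        (∀ r : ℝ, ∀ f ∈ D, r • f ∈ D) ∧
        (∀ f ∈ D, ∀ g ∈ D, (2 : ℝ)⁻¹ • (f * g + g * f) ∈ D) ∧
        (1 : C(Set.Icc (0:ℝ) 1, Matrix (Fin 2) (Fin 2) ℝ)) ∈ D ∧
        p₁ ∈ D ∧ p₂ ∈ D} := by
  set J := symmetricDiagonalAt (Fin 2) (⟨0, Set.left_mem_Icc.mpr zero_le_one⟩ : 𝕀)
    ⟨1, Set.right_mem_Icc.mpr zero_le_one⟩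
  convert_to (J : Set C(𝕀, M₂)) = _ using 1
  · ext f
    simp [J, symmetricDiagonalAt, Matrix.isDiag_fin_two_iff]
  refine subset_antisymm (fun f hf => ?_) (Set.sInter_subset_of_mem ?_)
  · rintro D ⟨hDc, h0, hadd, hsmul, hD, h1, hp₁D, hp₂D⟩
    let D' : Submodule ℝ C(𝕀, M₂) :=
      ⟨⟨⟨D, fun ha hb => hadd _ ha _ hb⟩, h0⟩, fun r _ hf => hsmul r _ hf⟩
    exact symmetricDiagonalAt_le_of_projections p₁ p₂ hp₁ hp₂ (D := D') hDc hD h1 hp₁D hp₂D hf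
  · refine ⟨isClosed_symmetricDiagonalAt _ _, J.zero_mem, fun _ hf _ hg => J.add_mem hf hg,
      fun r _ hf => J.smul_mem r hf, isJordanClosed_symmetricDiagonalAt _ _,
      one_mem_symmetricDiagonalAt _ _, ?_, ?_⟩ <;>
    simp [J, symmetricDiagonalAt, Matrix.isSymm_fin_two_iff, Matrix.isDiag_fin_two_iff, hp₁, hp₂]
end
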